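/- Let k < n, let W : ℝⁿ → ℝᵏ be linear, b ∈ ℝᵏ, σ : ℝᵏ → ℝᵏ any function, and G : ℝᵏ → ℝ^d any function. Define Net(x) = G(σ(W x + b)). Then there exist disjoint closed sets 𝒳₁ = {x : ‖x‖ ≤ 0.9} and 𝒳₂ = {x : 1 ≤ ‖x‖ ≤ 2} in ℝⁿ such that Net(𝒳₁) ∩ Net(𝒳₂) ≠ ∅; hence no disjoint sets D₁, D₂ ⊆ ℝ^d satisfy Net(𝒳₁) ⊆ D₁ and Net(𝒳₂) ⊆ D₂. -/

import Mathlib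

theorem LinearMap.exists_norm_eq_one_mem_ker_of_finrank_lt {𝕜 E F : Type*} [RCLike 𝕜]
    [NormedAddCommGroup E] [NormedSpace 𝕜 E] [FiniteDimensional 𝕜 E]
    [AddCommGroup F] [Module 𝕜 F] [FiniteDimensional 𝕜 F] (f : E →ₗ[𝕜] F)
    (h : Module.finrank 𝕜 F < Module.finrank 𝕜 E) :
    ∃ v : E, ‖v‖ = 1 ∧ f v = 0 := by
  obtain ⟨u, hu, hu0⟩ := Submodule.exists_mem_ne_zero_of_ne_bot (f.ker_ne_bot_of_finrank_lt h)
  refine ⟨(‖u‖⁻¹ : 𝕜) • u, norm_smul_inv_norm hu0, ?_⟩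
  rw [map_smul, LinearMap.mem_ker.1 hu, smul_zero]

theorem narrow_first_layer_cannot_separate {n k d : ℕ} (hkn : k < n)
    (W : EuclideanSpace ℝ (Fin n) →ₗ[ℝ] EuclideanSpace ℝ (Fin k))
    (b : EuclideanSpace ℝ (Fin k))
    (σ : EuclideanSpace ℝ (Fin k) → EuclideanSpace ℝ (Fin k))
    (G : EuclideanSpace ℝ (Fin k) → EuclideanSpace ℝ (Fin d)) :
    let Net : EuclideanSpace ℝ (Fin n) → EuclideanSpace ℝ (Fin d) :=
      fun x => G (σ (W x + b))
    let 𝒳₁ : Set (EuclideanSpace ℝ (Fin n)) := {x | ‖x‖ ≤ 0.9}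
    let 𝒳₂ : Set (EuclideanSpace ℝ (Fin n)) := {x | 1 ≤ ‖x‖ ∧ ‖x‖ ≤ 2}
    IsClosed 𝒳₁ ∧ IsClosed 𝒳₂ ∧ Disjoint 𝒳₁ 𝒳₂ ∧
    (Net '' 𝒳₁ ∩ Net '' 𝒳₂).Nonempty ∧
    ¬∃ D₁ D₂ : Set (EuclideanSpace ℝ (Fin d)),
      Disjoint D₁ D₂ ∧ Net '' 𝒳₁ ⊆ D₁ ∧ Net '' 𝒳₂ ⊆ D₂ := by
  intro Net 𝒳₁ 𝒳₂
  obtain ⟨v, hv, hWv⟩ := W.exists_norm_eq_one_mem_ker_of_finrank_lt (by simpa using hkn)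
  have hNet : Net v = Net 0 := by simp only [Net, hWv, map_zero]
  have hmeet : (Net '' 𝒳₁ ∩ Net '' 𝒳₂).Nonempty :=
    ⟨Net 0, ⟨0, by norm_num [𝒳₁], rfl⟩, ⟨v, by norm_num [𝒳₂, hv], hNet⟩⟩
  have hdisj : Disjoint 𝒳₁ 𝒳₂ := Set.disjoint_left.2 fun x h₁ h₂ => by
    norm_num [𝒳₁, 𝒳₂] at h₁ h₂
    linarith [h₂.1]
  refine ⟨isClosed_le continuous_norm continuous_const,
    (isClosed_le continuous_const continuous_norm).inter
      (isClosed_le continuous_norm continuous_const), hdisj, hmeet, ?_⟩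
  rintro ⟨D₁, D₂, hD, h₁, h₂⟩
  exact Set.not_disjoint_iff_nonempty_inter.2 hmeet (hD.mono h₁ h₂)
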